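/- arXiv:1305.4498 — 3 statements merged into one kernel-verified Lean document; each statement's English description precedes it below -/
import Mathlib

section
/- For fixed real parameters x₃ ≠ 0, y₁ ≠ 0, y₂, y₃ with y₂² + y₃² ≠ 0, consider the six quantities R¹₂₂₃ = y₁y₃/(2x₃²(y₂²+y₃²)), R¹₃₂₃ = -y₁y₂/(2x₃²(y₂²+y₃²)), R²₁₂₃ = -y₃/(2x₃²y₁), R²₃₂₃ = -1/(2x₃²), R³₁₂₃ = y₂/(2x₃²y₁), R³₂₂₃ = 1/(2x₃²), extended to a tensor R^h_{ijk} skew-symmetric in (j,k) with all other independent components zero. Then the solution set of Xʲ R^h_{ijk} = 0 (for all h,i,k) in X ∈ ℝ³ is exactly {t·(1,0,0) : t ∈ ℝ}. -/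
/-- Matrix of the independent components R^h_{i23} (0-based indices h, i). -/
noncomputable def Acomp (x₃ y₁ y₂ y₃ : ℝ) : Fin 3 → Fin 3 → ℝ :=
  ![![0, y₁ * y₃ / (2 * x₃ ^ 2 * (y₂ ^ 2 + y₃ ^ 2)),
        -(y₁ * y₂) / (2 * x₃ ^ 2 * (y₂ ^ 2 + y₃ ^ 2))],
    ![-y₃ / (2 * x₃ ^ 2 * y₁), 0, -1 / (2 * x₃ ^ 2)],
    ![y₂ / (2 * x₃ ^ 2 * y₁), 1 / (2 * x₃ ^ 2), 0]]

/-- The h-curvature components R^h_{ijk} of the counterexample: skew-symmetric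
in (j,k), with the only nonvanishing independent components those with
(j,k) = (2,3) (0-based: (1,2)). -/
noncomputable def Rc (x₃ y₁ y₂ y₃ : ℝ) (h i j k : Fin 3) : ℝ :=
  if j = 1 ∧ k = 2 then Acomp x₃ y₁ y₂ y₃ h i
  else if j = 2 ∧ k = 1 then -Acomp x₃ y₁ y₂ y₃ h i
  else 0

/-- the solution set of Xʲ R^h_{ijk} = 0 is the line ℝ·(1,0,0). -/
theorem stmt_1 (x₃ y₁ y₂ y₃ : ℝ) (hx₃ : x₃ ≠ 0) (hy₁ : y₁ ≠ 0)
    (hy : y₂ ^ 2 + y₃ ^ 2 ≠ 0) :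
    {X : Fin 3 → ℝ | ∀ h i k : Fin 3, ∑ j, X j * Rc x₃ y₁ y₂ y₃ h i j k = 0} =
      {X : Fin 3 → ℝ | ∃ t : ℝ, X = t • ![1, 0, 0]} := by
  have hA : Acomp x₃ y₁ y₂ y₃ 1 2 ≠ 0 := by
    simp [Acomp]
    positivity
  ext X
  simp only [Set.mem_setOf_eq]
  constructor
  · intro H
    refine ⟨X 0, ?_⟩
    have h1 : X 1 = 0 := by
      have := H 1 2 2
      simp [Rc, Fin.sum_univ_three] at this
      rcases this with h | h
      · exact h
      · exact absurd h hA
    have h2 : X 2 = 0 := by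
      have := H 1 2 1
      simp [Rc, Fin.sum_univ_three] at this
      rcases this with h | h
      · exact h
      · exact absurd h hA
    funext j
    fin_cases j <;> simp [h1, h2]
  · rintro ⟨t, rfl⟩ h i k
    simp [Rc, Fin.sum_univ_three]
end

section
/- Let V be a real inner product space and R : V × V × V → V a trilinear map that is skew-symmetric in its first two arguments, skew-adjoint in the last two slots (⟨R(X,Y)Z, W⟩ = -⟨R(X,Y)W, Z⟩), and satisfies the first Bianchi identity R(X,Y)Z + R(Y,Z)X + R(Z,X)Y = 0. Define 𝒩 = {X ∈ V : R(X,Y) = 0 for all Y ∈ V} and Ker = {Z ∈ V : R(X,Y)Z = 0 for all X,Y ∈ V}. Then 𝒩 = Ker. -/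
open RealInnerProductSpace

/-- under skew-symmetry, skew-adjointness and the first Bianchi
identity, the nullity space equals the kernel space. -/
theorem stmt_4 {V : Type*} [NormedAddCommGroup V] [InnerProductSpace ℝ V]
    (R : V →ₗ[ℝ] V →ₗ[ℝ] V →ₗ[ℝ] V)
    (hskew : ∀ X Y Z : V, R X Y Z = - R Y X Z)
    (hadj : ∀ X Y Z W : V, ⟪R X Y Z, W⟫ = - ⟪R X Y W, Z⟫)
    (hbianchi : ∀ X Y Z : V, R X Y Z + R Y Z X + R Z X Y = 0) :
    {X : V | ∀ Y : V, R X Y = 0} = {Z : V | ∀ X Y : V, R X Y Z = 0} := by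
  have s : ∀ X Y Z W : V, ⟪R X Y Z, W⟫ = - ⟪R Y X Z, W⟫ := by
    intro X Y Z W
    rw [hskew X Y Z, inner_neg_left]
  have a := hadj
  have b : ∀ X Y Z W : V, ⟪R X Y Z, W⟫ + ⟪R Y Z X, W⟫ + ⟪R Z X Y, W⟫ = 0 := by
    intro X Y Z W
    rw [← inner_add_left, ← inner_add_left, hbianchi, inner_zero_left]
  have pair : ∀ X Y Z W : V, ⟪R X Y Z, W⟫ = ⟪R Z W X, Y⟫ := by
    intro X Y Z W
    linarith [b X Y Z W, b Y Z W X, b Z W X Y, b W X Y Z,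
      s X Y Z W, s X Y W Z, s X Z Y W, s X Z W Y, s X W Y Z, s X W Z Y, s Y X Z W, s Y X W Z, s Y Z X W, s Y Z W X, s Y W X Z, s Y W Z X, s Z X Y W, s Z X W Y, s Z Y X W, s Z Y W X, s Z W X Y, s Z W Y X, s W X Y Z, s W X Z Y, s W Y X Z, s W Y Z X, s W Z X Y, s W Z Y X,
      a X Y Z W, a X Y W Z, a X Z Y W, a X Z W Y, a X W Y Z, a X W Z Y, a Y X Z W, a Y X W Z, a Y Z X W, a Y Z W X, a Y W X Z, a Y W Z X, a Z X Y W, a Z X W Y, a Z Y X W, a Z Y W X, a Z W X Y, a Z W Y X, a W X Y Z, a W X Z Y, a W Y X Z, a W Y Z X, a W Z X Y, a W Z Y X]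
  ext N
  simp only [Set.mem_setOf_eq]
  constructor
  · intro h X Y
    apply ext_inner_right ℝ
    intro W
    rw [pair X Y N W]
    simp [h W]
  · intro h Y
    apply LinearMap.ext
    intro Z
    apply ext_inner_right ℝ
    intro W
    rw [show (0 : V →ₗ[ℝ] V) Z = 0 from rfl, inner_zero_left, ← pair Z W N Y, h Z W,
      inner_zero_left]
end

section
/- The dual statement used in the counterexample discussion: there exist a real inner product space V, a trilinear map R : V×V×V → V skew in the first two arguments and skew-adjoint in (Z,W) (⟨R(X,Y)Z,W⟩ = -⟨R(X,Y)W,Z⟩), and vectors such that the nullity space {X : R(X,·)· = 0} and kernel space {Z : R(·,·)Z = 0} are both 1-dimensional but distinct. (Witness: V = ℝ³ with standard inner product and R built from the components R^h_{ijk} of the paper's example at the point x₃ = 1, y = (1,1,0).) -/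
/-- The curvature operator on ℝ³ built from the components of the paper's
example at the point x₃ = 1, y = (1,1,0): R(X,Y)Z = ∑ X^j Y^k Z^i R^h_{ijk} e_h. -/
noncomputable def Rop (X Y Z : Fin 3 → ℝ) : Fin 3 → ℝ :=
  fun h => ∑ i, ∑ j, ∑ k, X j * Y k * Z i * Rc 1 1 1 0 h i j k


lemma Rop_apply (X Y Z : Fin 3 → ℝ) :
    Rop X Y Z = ![-((X 1 * Y 2 - X 2 * Y 1) * Z 2) / 2,
                  -((X 1 * Y 2 - X 2 * Y 1) * Z 2) / 2,
                  (X 1 * Y 2 - X 2 * Y 1) * (Z 0 + Z 1) / 2] := by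
  funext h
  fin_cases h <;>
    simp [Rop, Rc, Acomp, Fin.sum_univ_three] <;> ring

/-- a trilinear curvature-type map, skew in the first two
arguments and skew-adjoint in the last two slots (w.r.t. the standard inner
product ∑ₕ vₕwₕ on ℝ³), whose nullity space and kernel space are both
1-dimensional lines but distinct. -/
theorem stmt_15 :
    (∀ X Y Z : Fin 3 → ℝ, Rop X Y Z = - Rop Y X Z) ∧
    (∀ X Y Z W : Fin 3 → ℝ,
        ∑ h, Rop X Y Z h * W h = - ∑ h, Rop X Y W h * Z h) ∧
    {X : Fin 3 → ℝ | ∀ Y Z : Fin 3 → ℝ, Rop X Y Z = 0} =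
      {X : Fin 3 → ℝ | ∃ t : ℝ, X = t • ![1, 0, 0]} ∧
    {Z : Fin 3 → ℝ | ∀ X Y : Fin 3 → ℝ, Rop X Y Z = 0} =
      {Z : Fin 3 → ℝ | ∃ t : ℝ, Z = t • ![1, -1, 0]} ∧
    {X : Fin 3 → ℝ | ∀ Y Z : Fin 3 → ℝ, Rop X Y Z = 0} ≠
      {Z : Fin 3 → ℝ | ∀ X Y : Fin 3 → ℝ, Rop X Y Z = 0} := by
  have hnull : {X : Fin 3 → ℝ | ∀ Y Z : Fin 3 → ℝ, Rop X Y Z = 0} =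
      {X : Fin 3 → ℝ | ∃ t : ℝ, X = t • ![1, 0, 0]} := by
    ext X
    simp only [Set.mem_setOf_eq]
    constructor
    · intro hX
      have h1 := congrFun (hX ![0,0,1] ![0,0,1]) 0
      have h2 := congrFun (hX ![0,1,0] ![0,0,1]) 0
      rw [Rop_apply] at h1 h2
      simp at h1 h2
      refine ⟨X 0, ?_⟩
      funext h; fin_cases h <;> simp [h1, h2]
    · rintro ⟨t, rfl⟩ Y Z
      rw [Rop_apply]
      funext h; fin_cases h <;> simp
  have hker : {Z : Fin 3 → ℝ | ∀ X Y : Fin 3 → ℝ, Rop X Y Z = 0} =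
      {Z : Fin 3 → ℝ | ∃ t : ℝ, Z = t • ![1, -1, 0]} := by
    ext Z
    simp only [Set.mem_setOf_eq]
    constructor
    · intro hZ
      have h1 := congrFun (hZ ![0,1,0] ![0,0,1]) 0
      have h2 := congrFun (hZ ![0,1,0] ![0,0,1]) 2
      rw [Rop_apply] at h1 h2
      simp at h1 h2
      refine ⟨Z 0, ?_⟩
      funext h; fin_cases h <;> simp [h1] <;> linarith
    · rintro ⟨t, rfl⟩ X Y
      rw [Rop_apply]
      funext h; fin_cases h <;> simp
  refine ⟨?_, ?_, hnull, hker, ?_⟩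
  · intro X Y Z
    rw [Rop_apply, Rop_apply]
    funext h; fin_cases h <;> simp <;> ring
  · intro X Y Z W
    rw [Rop_apply, Rop_apply, Fin.sum_univ_three, Fin.sum_univ_three]
    simp; ring
  · rw [hnull, hker]
    intro h
    have h1 : (![1,0,0] : Fin 3 → ℝ) ∈ {X : Fin 3 → ℝ | ∃ t : ℝ, X = t • ![1, 0, 0]} :=
      ⟨1, by funext i; fin_cases i <;> simp⟩
    rw [h] at h1
    obtain ⟨t, ht⟩ := h1
    have h0 := congrFun ht 0
    have h1' := congrFun ht 1
    simp at h0 h1'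
    rw [← h0] at h1'
    norm_num at h1'
end
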